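/- arXiv:1906.09498 — 7 statements merged into one kernel-verified Lean document; each statement's English description precedes it below -/
import Mathlib

section
/- For all t in (0, 1/√3], the value t·(arctan(t) + arctan((1-t²)/(2t))) is positive and at most π/(3√3). -/
/-!
Since `2t / (1 - t²) = tan (2 arctan t)`, the sum of the two arctangents is `π/2 - arctan t`, so
`φ(t) = t (π/2 - arctan t)`. As `arctan` is 1-Lipschitz, this product increases on `[0, s]` whenever
`s ≤ π/2 - arctan s`, which holds for `s = 1/√3` (where `arctan s = π/6`); the bound is the value
at `1/√3`.
-/

open Real

theorem sub_arctan_monotone : Monotone fun x : ℝ => x - arctan x := by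
  refine monotone_of_deriv_nonneg (differentiable_id.sub differentiable_arctan) fun x => ?_
  rw [deriv_fun_sub differentiableAt_fun_id (differentiableAt_arctan x), deriv_id'',
    Real.deriv_arctan]
  have : 1 / (1 + x ^ 2) ≤ 1 := div_le_one_of_le₀ (by nlinarith) (by positivity)
  linarith

theorem arctan_sub_arctan_le_sub {x y : ℝ} (h : x ≤ y) : arctan y - arctan x ≤ y - x := by
  have := sub_arctan_monotone h
  simp only at this
  linarith

theorem arctan_one_sub_sq_div_two_mul {t : ℝ} (h0 : 0 < t) (h1 : t < 1) :
    arctan ((1 - t ^ 2) / (2 * t)) = π / 2 - 2 * arctan t := by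
  have hpos : 0 < 2 * t / (1 - t ^ 2) := div_pos (by positivity) (by nlinarith)
  rw [← inv_div, arctan_inv_of_pos hpos, two_mul_arctan (by linarith) h1]

theorem mul_pi_div_two_sub_arctan_le {t s : ℝ} (ht : 0 ≤ t) (hts : t ≤ s)
    (hs : s ≤ π / 2 - arctan s) : t * (π / 2 - arctan t) ≤ s * (π / 2 - arctan s) := by
  have hlip := arctan_sub_arctan_le_sub hts
  -- the difference of the two sides is `(s - t) (π/2 - arctan s) - t (arctan s - arctan t)`
  nlinarith [mul_le_mul_of_nonneg_left hlip ht]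

theorem inv_sqrt_three_lt_one : (√3)⁻¹ < 1 := by
  rw [inv_lt_one₀ (by positivity), lt_sqrt zero_le_one]; norm_num

theorem stmt_0 (t : ℝ) (h0 : 0 < t) (h1 : t ≤ 1 / Real.sqrt 3) :
    0 < t * (Real.arctan t + Real.arctan ((1 - t ^ 2) / (2 * t))) ∧
      t * (Real.arctan t + Real.arctan ((1 - t ^ 2) / (2 * t))) ≤ π / (3 * Real.sqrt 3) := by
  rw [one_div] at h1
  have hs1 := inv_sqrt_three_lt_one
  have hsum : arctan t + arctan ((1 - t ^ 2) / (2 * t)) = π / 2 - arctan t := by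
    rw [arctan_one_sub_sq_div_two_mul h0 (h1.trans_lt hs1)]; ring
  rw [hsum]
  refine ⟨mul_pos h0 (sub_pos.2 (arctan_lt_pi_div_two t)), ?_⟩
  calc t * (π / 2 - arctan t) ≤ (√3)⁻¹ * (π / 2 - arctan (√3)⁻¹) :=
        mul_pi_div_two_sub_arctan_le h0.le h1
          (by rw [arctan_inv_sqrt_three]; linarith [pi_gt_three])
    _ = π / (3 * √3) := by rw [arctan_inv_sqrt_three]; field_simp; ring
end

section
/- For all y in [1/2, 1], 0 ≤ √((1-y)/(1+y)) · (arctan(√((1-y)/(1+y))) + arctan(y/√(1-y²))) ≤ π/(3√3) < 0.61. -/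
/-! Put `a = √((1 - y) / (1 + y))`. For `0 < y < 1` the half-angle formula gives
`2 arctan a = arccos y`, while `arctan (y / √(1 - y²)) = arcsin y = π/2 - arccos y`, so the
expression equals `a (π/2 - arctan a)`. This is increasing in `a` as long as `a + arctan a ≤ π/2`
(because `arctan` is 1-Lipschitz), and `y ≥ 1/2` means `a ≤ 1/√3`, where its value is
`(1/√3)(π/2 - π/6) = π/(3√3)`. -/

open Real

lemma Real.arctan_le_self {x : ℝ} (hx : 0 ≤ x) : arctan x ≤ x := by
  simpa only [tan_arctan] using le_tan (arctan_nonneg.mpr hx) (arctan_lt_pi_div_two x)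

lemma Real.arctan_sub_arctan_le {a b : ℝ} (ha : 0 ≤ a) (hab : a ≤ b) :
    arctan b - arctan a ≤ b - a := by
  have hb : 0 ≤ b := ha.trans hab
  have hdiff : arctan b - arctan a = arctan ((b - a) / (1 + b * a)) := by
    rw [sub_eq_add_neg, ← arctan_neg, arctan_add (by nlinarith)]
    congr 1
    ring
  rw [hdiff]
  calc arctan ((b - a) / (1 + b * a)) ≤ (b - a) / (1 + b * a) :=
        arctan_le_self (div_nonneg (by linarith) (by positivity))
    _ ≤ b - a := div_le_self (by linarith) (by nlinarith)

lemma mul_pi_div_two_sub_arctan_le_s1 {a b : ℝ} (ha : 0 ≤ a) (hab : a ≤ b)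
    (hb : b + arctan b ≤ π / 2) : a * (π / 2 - arctan a) ≤ b * (π / 2 - arctan b) := by
  nlinarith [arctan_sub_arctan_le ha hab]

lemma two_mul_arctan_sqrt_eq_arccos {y : ℝ} (hy₀ : 0 < y) (hy₁ : y ≤ 1) :
    2 * arctan √((1 - y) / (1 + y)) = arccos y := by
  set a := √((1 - y) / (1 + y))
  have ha_sq : a ^ 2 = (1 - y) / (1 + y) := sq_sqrt (div_nonneg (by linarith) (by linarith))
  have ha_lt : a < 1 := by
    rw [← sqrt_one]
    exact sqrt_lt_sqrt (div_nonneg (by linarith) (by linarith))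
      ((div_lt_one (by linarith)).mpr (by linarith))
  have ha_mul : a * (1 + y) = √(1 - y ^ 2) := by
    rw [← sqrt_sq (by positivity : 0 ≤ a * (1 + y)), mul_pow, ha_sq]
    congr 1
    field_simp
    ring
  rw [two_mul_arctan (by linarith [sqrt_nonneg ((1 - y) / (1 + y))]) ha_lt,
    arccos_eq_arctan hy₀, ← ha_mul, ha_sq]
  congr 1
  field_simp [hy₀.ne']
  ring

lemma arctan_sqrt_add_arctan_div_sqrt {y : ℝ} (hy₀ : 0 < y) (hy₁ : y < 1) :
    arctan √((1 - y) / (1 + y)) + arctan (y / √(1 - y ^ 2)) =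
      π / 2 - arctan √((1 - y) / (1 + y)) := by
  have h := two_mul_arctan_sqrt_eq_arccos hy₀ hy₁.le
  rw [← arcsin_eq_arctan ⟨by linarith, hy₁⟩]
  linarith [arccos_eq_pi_div_two_sub_arcsin y]

lemma pi_div_three_mul_sqrt_three_lt : π / (3 * √3) < 0.61 := by
  have h3 : (1.73 : ℝ) < √3 := by
    rw [lt_sqrt (by norm_num)]
    norm_num
  rw [div_lt_iff₀ (by positivity)]
  nlinarith [pi_lt_d2]

theorem stmt_1 (y : ℝ) (hy : y ∈ Set.Icc (1 / 2 : ℝ) 1) :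
    0 ≤ Real.sqrt ((1 - y) / (1 + y)) *
        (Real.arctan (Real.sqrt ((1 - y) / (1 + y))) +
          Real.arctan (y / Real.sqrt (1 - y ^ 2))) ∧
      Real.sqrt ((1 - y) / (1 + y)) *
          (Real.arctan (Real.sqrt ((1 - y) / (1 + y))) +
            Real.arctan (y / Real.sqrt (1 - y ^ 2))) ≤ π / (3 * Real.sqrt 3) ∧
      π / (3 * Real.sqrt 3) < 0.61 := by
  obtain ⟨hy₀, hy₁⟩ := hy
  have h_eq : √((1 - y) / (1 + y)) * (arctan √((1 - y) / (1 + y)) + arctan (y / √(1 - y ^ 2))) =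
      √((1 - y) / (1 + y)) * (π / 2 - arctan √((1 - y) / (1 + y))) := by
    rcases hy₁.lt_or_eq with hy₁ | rfl
    · rw [arctan_sqrt_add_arctan_div_sqrt (by linarith) hy₁]
    · simp
  set a := √((1 - y) / (1 + y))
  have ha : 0 ≤ a := sqrt_nonneg _
  have ha_le : a ≤ (√3)⁻¹ := by
    rw [← sqrt_inv]
    exact sqrt_le_sqrt (by rw [div_le_iff₀ (by linarith)]; linarith)
  have h_inv_sqrt_three : (√3)⁻¹ < 1 := inv_lt_one_of_one_lt₀ (by
    rw [lt_sqrt zero_le_one]; norm_num)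
  refine ⟨?_, ?_, pi_div_three_mul_sqrt_three_lt⟩
  · rw [h_eq]
    exact mul_nonneg ha (by linarith [arctan_lt_pi_div_two a])
  · calc _ = a * (π / 2 - arctan a) := h_eq
      _ ≤ (√3)⁻¹ * (π / 2 - arctan (√3)⁻¹) := mul_pi_div_two_sub_arctan_le_s1 ha ha_le
          (by rw [arctan_inv_sqrt_three]; linarith [pi_gt_three])
      _ = π / (3 * √3) := by
        rw [arctan_inv_sqrt_three]
        field_simp
        ring
end

section
/- For α ∈ (0,1) and every positive integer n, A_{2n-1}(α,1) ≥ 2^α − α·β_n/(2n), where β_n = ∏_{k=1}^{2n-1} (1 − α/k). -/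
/-!
Write `R_{a,m}(x) = (1 + x)^a - ∑_{k<m} (a choose k) x^k` for the remainder of the binomial series.
Since `(k + 1) (a choose k+1) = a (a-1 choose k)`, the derivative of `R_{a,m+1}` is `a R_{a-1,m}`,
and `R_{a,m+1}(0) = 0`. Integrating from `0`, induction on `m` shows that `(-1)^m R_{a,m}(x) ≥ 0`
for `a ≤ 0` and `x ≥ 0`, and one more step gives `(-1)^m R_{a,m+1}(x) ≥ 0` for `0 ≤ a ≤ 1`.
At `x = 1` with `m = 2n - 1` odd this says `A_{2n-1}(α,1) ≥ 2^α`, which is stronger than the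
claim because `β_n ≥ 0`.
-/

open Finset Nat

theorem Ring.choose_eq_prod_range_div_factorial {K : Type*} [Field K] [CharZero K] (a : K)
    (k : ℕ) : Ring.choose a k = (∏ j ∈ range k, (a - j)) / k ! := by
  rw [Ring.choose_eq_smul, ← Polynomial.aeval_eq_smeval, ← descPochhammer_eval_eq_prod_range,
    Polynomial.aeval_def, Polynomial.eval₂_eq_eval_map, descPochhammer_map, smul_eq_mul,
    div_eq_inv_mul]

theorem Ring.succ_mul_choose_succ {K : Type*} [Field K] [CharZero K] (a : K) (k : ℕ) :
    (k + 1) * Ring.choose a (k + 1) = a * Ring.choose (a - 1) k := by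
  simpa [Ring.choose_one_right, nsmul_eq_mul] using
    Ring.choose_smul_choose a (n := k + 1) (k := 1) (by omega)

noncomputable def binomialRemainder (a : ℝ) (m : ℕ) (x : ℝ) : ℝ :=
  (1 + x) ^ a - ∑ k ∈ range m, Ring.choose a k * x ^ k

theorem binomialRemainder_succ_zero (a : ℝ) (m : ℕ) : binomialRemainder a (m + 1) 0 = 0 := by
  simp [binomialRemainder, sum_range_succ']

theorem hasDerivAt_binomialRemainder (a : ℝ) (m : ℕ) {x : ℝ} (hx : -1 < x) :
    HasDerivAt (binomialRemainder a (m + 1)) (a * binomialRemainder (a - 1) m x) x := by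
  have hpow : HasDerivAt (fun y : ℝ => (1 + y) ^ a) (a * (1 + x) ^ (a - 1)) x := by
    simpa using ((hasDerivAt_id' x).const_add 1).rpow_const (p := a) (Or.inl (by linarith))
  have hpoly : HasDerivAt (fun y : ℝ => ∑ k ∈ range (m + 1), Ring.choose a k * y ^ k)
      (∑ k ∈ range (m + 1), Ring.choose a k * (k * x ^ (k - 1))) x :=
    HasDerivAt.fun_sum fun k _ => (hasDerivAt_pow k x).const_mul _
  have hcoeff : ∑ k ∈ range (m + 1), Ring.choose a k * (k * x ^ (k - 1))
      = a * ∑ k ∈ range m, Ring.choose (a - 1) k * x ^ k := by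
    rw [sum_range_succ', mul_sum]
    refine (add_eq_left.mpr (by simp)).trans (sum_congr rfl fun k _ => ?_)
    rw [Nat.add_sub_cancel, cast_succ, ← mul_assoc, mul_comm (Ring.choose a (k + 1)),
      Ring.succ_mul_choose_succ, mul_assoc]
  refine (hpow.sub hpoly).congr_deriv ?_
  rw [hcoeff, binomialRemainder]
  ring

theorem mul_binomialRemainder_succ_nonneg {a c : ℝ} {m : ℕ}
    (h : ∀ x, 0 ≤ x → 0 ≤ c * (a * binomialRemainder (a - 1) m x)) {x : ℝ} (hx : 0 ≤ x) :
    0 ≤ c * binomialRemainder a (m + 1) x := by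
  have hderiv : ∀ y ∈ Set.Ici (0 : ℝ), HasDerivAt (fun y => c * binomialRemainder a (m + 1) y)
      (c * (a * binomialRemainder (a - 1) m y)) y := fun y hy =>
    (hasDerivAt_binomialRemainder a m (by linarith [Set.mem_Ici.mp hy])).const_mul c
  have hmono : MonotoneOn (fun y => c * binomialRemainder a (m + 1) y) (Set.Ici 0) := by
    refine monotoneOn_of_hasDerivWithinAt_nonneg (convex_Ici 0)
      (fun y hy => (hderiv y hy).continuousAt.continuousWithinAt)
      (fun y hy => (hderiv y (interior_subset hy)).hasDerivWithinAt) fun y hy => ?_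
    rw [interior_Ici] at hy
    exact h y (le_of_lt hy)
  simpa [binomialRemainder_succ_zero] using hmono Set.self_mem_Ici hx hx

theorem neg_one_pow_mul_binomialRemainder_nonneg {a : ℝ} (ha : a ≤ 0) (m : ℕ) {x : ℝ}
    (hx : 0 ≤ x) : 0 ≤ (-1) ^ m * binomialRemainder a m x := by
  induction m generalizing a x with
  | zero => simpa [binomialRemainder] using Real.rpow_nonneg (by linarith) a
  | succ m ih =>
    refine mul_binomialRemainder_succ_nonneg (fun y hy => ?_) hx
    have hy := ih (a := a - 1) (by linarith) hy
    calc (0 : ℝ) ≤ -a * ((-1) ^ m * binomialRemainder (a - 1) m y) :=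
          mul_nonneg (by linarith) hy
      _ = (-1) ^ (m + 1) * (a * binomialRemainder (a - 1) m y) := by ring

theorem neg_one_pow_mul_binomialRemainder_succ_nonneg {a : ℝ} (ha₀ : 0 ≤ a) (ha₁ : a ≤ 1)
    (m : ℕ) {x : ℝ} (hx : 0 ≤ x) : 0 ≤ (-1) ^ m * binomialRemainder a (m + 1) x := by
  refine mul_binomialRemainder_succ_nonneg (fun y hy => ?_) hx
  have hy := neg_one_pow_mul_binomialRemainder_nonneg (a := a - 1) (by linarith) m hy
  calc (0 : ℝ) ≤ a * ((-1) ^ m * binomialRemainder (a - 1) m y) := mul_nonneg ha₀ hy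
    _ = (-1) ^ m * (a * binomialRemainder (a - 1) m y) := by ring

theorem two_rpow_le_sum_choose {a : ℝ} (ha₀ : 0 ≤ a) (ha₁ : a ≤ 1) {m : ℕ} (hm : Odd m) :
    (2 : ℝ) ^ a ≤ ∑ k ∈ range (m + 1), Ring.choose a k := by
  have h := neg_one_pow_mul_binomialRemainder_succ_nonneg ha₀ ha₁ m zero_le_one
  rw [hm.neg_one_pow, binomialRemainder] at h
  norm_num at h
  linarith

theorem stmt_10 (α : ℝ) (hα : α ∈ Set.Ioo (0 : ℝ) 1) (n : ℕ) (hn : 0 < n) :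
    (∑ k ∈ Finset.range (2 * n), (∏ j ∈ Finset.range k, (α - j)) / k.factorial) ≥
      (2 : ℝ) ^ α - α * (∏ k ∈ Finset.Icc 1 (2 * n - 1), (1 - α / k)) / (2 * n) := by
  obtain ⟨hα₀, hα₁⟩ := hα
  have hpartial : (2 : ℝ) ^ α ≤ ∑ k ∈ range (2 * n), (∏ j ∈ range k, (α - j)) / k ! := by
    have h := two_rpow_le_sum_choose hα₀.le hα₁.le (m := 2 * n - 1) ⟨n - 1, by omega⟩
    rw [Nat.sub_add_cancel (by omega)] at h
    simpa only [Ring.choose_eq_prod_range_div_factorial] using h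
  have hβ : 0 ≤ ∏ k ∈ Icc 1 (2 * n - 1), (1 - α / k) := by
    refine prod_nonneg fun k hk => sub_nonneg.mpr ?_
    have hk : (1 : ℝ) ≤ k := by exact_mod_cast (mem_Icc.mp hk).1
    rw [div_le_one (by linarith)]
    linarith
  have hcorrection : 0 ≤ α * (∏ k ∈ Icc 1 (2 * n - 1), (1 - α / k)) / (2 * n) := by positivity
  linarith
end

section
/- For α ∈ (0,1), y ∈ [1/2,1] and every positive integer n, the integral I_n(y) = ∫₀¹ ((1-t)/√(1+t²-2ty))^{2n-1} (√(1+t²-2ty))^{α-1} dt satisfies I_n(y) ≤ √((1-y)/(1+y))·(arctan√((1-y)/(1+y)) + arctan(y/√(1-y²))) − (2-2y)^{α/2}/α + 1/α. -/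
/-!
Write `u = 1 + t² - 2ty`. For `y < 1`, `u = (t - y)² + (1 - y²) > 0`. Since `y ≤ 1`,
`(1 - t)² ≤ u`, so the odd power of `(1 - t)/√u ≤ 1` may be replaced by its first power, which
bounds the integrand by `(1 - t) u^(α/2 - 1)`. Split `1 - t = (1 - y) + (y - t)`. Because `y ≥ 1/2`
we have `u ≤ 1`, so `u^(α/2 - 1) ≤ u⁻¹` in the first part, whose integral is an arctangent.
The second part `(y - t) u^(α/2 - 1)` is exactly the derivative of `-u^(α/2)/α`.
At `y = 1` the integrand is `(1 - t)^(α - 1)`, whose integral is `1/α`.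
-/

open Real

lemma one_add_sq_sub_two_mul_pos {y : ℝ} (hy : y ^ 2 < 1) (t : ℝ) :
    0 < 1 + t ^ 2 - 2 * t * y := by
  nlinarith [sq_nonneg (t - y)]

lemma continuous_integrand {y : ℝ} (hy : y ^ 2 < 1) (α : ℝ) (k : ℕ) :
    Continuous fun t : ℝ =>
      ((1 - t) / √(1 + t ^ 2 - 2 * t * y)) ^ k * √(1 + t ^ 2 - 2 * t * y) ^ (α - 1) := by
  have hs : Continuous fun t : ℝ => √(1 + t ^ 2 - 2 * t * y) := by fun_prop
  have hs0 t : √(1 + t ^ 2 - 2 * t * y) ≠ 0 := (sqrt_pos.2 (one_add_sq_sub_two_mul_pos hy t)).ne'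
  exact (((continuous_const.sub continuous_id).div hs hs0).pow k).mul
    (hs.rpow_const fun t => Or.inl (hs0 t))

lemma hasDerivAt_arctan_quadratic {y : ℝ} (hy : y ^ 2 < 1) (t : ℝ) :
    HasDerivAt (fun t => arctan ((t - y) / √(1 - y ^ 2)) / √(1 - y ^ 2))
      (1 + t ^ 2 - 2 * t * y)⁻¹ t := by
  have hc : 0 < √(1 - y ^ 2) := sqrt_pos.mpr (by linarith)
  have hc2 : √(1 - y ^ 2) ^ 2 = 1 - y ^ 2 := sq_sqrt (by linarith)
  have hu := one_add_sq_sub_two_mul_pos hy t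
  refine ((((hasDerivAt_id' t).sub_const y).div_const _).arctan.div_const _).congr_deriv ?_
  field_simp
  rw [hc2, eq_div_iff (by linarith)]
  ring

lemma hasDerivAt_rpow_quadratic {y α : ℝ} (hα : α ≠ 0) {t : ℝ}
    (hu : 1 + t ^ 2 - 2 * t * y ≠ 0) :
    HasDerivAt (fun t => -(1 + t ^ 2 - 2 * t * y) ^ (α / 2) / α)
      ((y - t) * (1 + t ^ 2 - 2 * t * y) ^ (α / 2 - 1)) t := by
  have hq : HasDerivAt (fun t => 1 + t ^ 2 - 2 * t * y) (2 * t - 2 * y) t := by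
    refine ((((hasDerivAt_id' t).pow 2).const_add 1).sub
      (((hasDerivAt_id' t).const_mul 2).mul_const y)).congr_deriv ?_
    ring
  refine ((hq.rpow_const (p := α / 2) (Or.inl hu)).neg.div_const α).congr_deriv ?_
  field_simp
  ring

noncomputable def majorant (α y t : ℝ) : ℝ :=
  (1 - y) * (1 + t ^ 2 - 2 * t * y)⁻¹ + (y - t) * (1 + t ^ 2 - 2 * t * y) ^ (α / 2 - 1)

lemma continuous_majorant {y : ℝ} (hy : y ^ 2 < 1) (α : ℝ) : Continuous (majorant α y) := by
  have hu t := (one_add_sq_sub_two_mul_pos hy t).ne'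
  have hq : Continuous fun t : ℝ => 1 + t ^ 2 - 2 * t * y := by fun_prop
  exact (continuous_const.mul (hq.inv₀ hu)).add
    ((continuous_const.sub continuous_id).mul (hq.rpow_const fun t => Or.inl (hu t)))

lemma integral_majorant {y α : ℝ} (hy : y ^ 2 < 1) (hα : α ≠ 0) :
    ∫ t in (0 : ℝ)..1, majorant α y t =
      (1 - y) * ((arctan ((1 - y) / √(1 - y ^ 2)) + arctan (y / √(1 - y ^ 2))) / √(1 - y ^ 2)) +
        (1 - (2 - 2 * y) ^ (α / 2)) / α := by
  have hu t := (one_add_sq_sub_two_mul_pos hy t).ne'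
  unfold majorant
  rw [intervalIntegral.integral_eq_sub_of_hasDerivAt
    (fun t _ => ((hasDerivAt_arctan_quadratic hy t).const_mul (1 - y)).add
      (hasDerivAt_rpow_quadratic hα (hu t)))
    ((continuous_majorant hy α).intervalIntegrable 0 1)]
  simp only [Pi.add_apply, zero_sub, neg_div, arctan_neg]
  norm_num
  ring

lemma div_pow_mul_rpow_le {a s β : ℝ} {k : ℕ} (ha : 0 ≤ a) (hs : 0 < s) (has : a ≤ s)
    (hk : k ≠ 0) : (a / s) ^ k * s ^ β ≤ a * s ^ (β - 1) :=
  calc (a / s) ^ k * s ^ β ≤ a / s * s ^ β :=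
        mul_le_mul_of_nonneg_right
          (pow_le_of_le_one (div_nonneg ha hs.le) ((div_le_one hs).2 has) hk) (rpow_nonneg hs.le _)
    _ = a * s ^ (β - 1) := by rw [rpow_sub_one hs.ne']; ring

lemma mul_rpow_sub_one_le_mul_inv {c u γ : ℝ} (hc : 0 ≤ c) (hu : 0 < u) (hu1 : u ≤ 1)
    (hγ : 0 ≤ γ) : c * u ^ (γ - 1) ≤ c * u⁻¹ := by
  rw [rpow_sub_one hu.ne', div_eq_mul_inv]
  exact mul_le_mul_of_nonneg_left
    (mul_le_of_le_one_left (inv_nonneg.2 hu.le) (rpow_le_one hu.le hu1 hγ)) hc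

lemma integrand_le_majorant {α y t : ℝ} {n : ℕ} (hα : 0 ≤ α) (hy : y ∈ Set.Icc (1 / 2 : ℝ) 1)
    (ht : t ∈ Set.Icc (0 : ℝ) 1) (hu : 0 < 1 + t ^ 2 - 2 * t * y) (hn : n ≠ 0) :
    ((1 - t) / √(1 + t ^ 2 - 2 * t * y)) ^ (2 * n - 1) * √(1 + t ^ 2 - 2 * t * y) ^ (α - 1) ≤
      majorant α y t := by
  obtain ⟨hy1, hy2⟩ := hy
  obtain ⟨ht0, ht1⟩ := ht
  have hle_sqrt : 1 - t ≤ √(1 + t ^ 2 - 2 * t * y) := le_sqrt_of_sq_le (by nlinarith)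
  have hu1 : 1 + t ^ 2 - 2 * t * y ≤ 1 := by nlinarith
  have hsqrt_rpow :
      √(1 + t ^ 2 - 2 * t * y) ^ (α - 1 - 1) = (1 + t ^ 2 - 2 * t * y) ^ (α / 2 - 1) := by
    rw [sqrt_eq_rpow, ← rpow_mul hu.le]
    ring_nf
  calc _ ≤ (1 - t) * √(1 + t ^ 2 - 2 * t * y) ^ (α - 1 - 1) :=
        div_pow_mul_rpow_le (by linarith) (sqrt_pos.2 hu) hle_sqrt (by omega)
    _ = (1 - y) * (1 + t ^ 2 - 2 * t * y) ^ (α / 2 - 1) +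
          (y - t) * (1 + t ^ 2 - 2 * t * y) ^ (α / 2 - 1) := by rw [hsqrt_rpow]; ring
    _ ≤ _ := add_le_add_left
          (mul_rpow_sub_one_le_mul_inv (by linarith) hu hu1 (by positivity)) _

lemma integral_at_one {α : ℝ} (hα : 0 < α) (n : ℕ) :
    ∫ t in (0 : ℝ)..1, ((1 - t) / √(1 + t ^ 2 - 2 * t * 1)) ^ (2 * n - 1) *
      √(1 + t ^ 2 - 2 * t * 1) ^ (α - 1) = 1 / α := by
  rw [intervalIntegral.integral_congr_Ioo_of_le zero_le_one (g := fun t => (1 - t) ^ (α - 1))]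
  · rw [intervalIntegral.integral_comp_sub_left (fun x => x ^ (α - 1)),
      integral_rpow (Or.inl (by linarith))]
    norm_num [zero_rpow hα.ne']
  · rintro t ⟨-, ht1⟩
    have hsqrt : √(1 + t ^ 2 - 2 * t * 1) = 1 - t := by
      rw [show 1 + t ^ 2 - 2 * t * 1 = (1 - t) ^ 2 by ring, sqrt_sq (by linarith)]
    dsimp only
    rw [hsqrt, div_self (by linarith), one_pow, one_mul]

lemma div_sqrt_one_sub_sq {y : ℝ} (hy : y ^ 2 < 1) :
    (1 - y) / √(1 - y ^ 2) = √((1 - y) / (1 + y)) := by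
  have h1 : 0 < 1 - y := by nlinarith
  have h2 : 0 < 1 + y := by nlinarith
  have h3 : 1 - y ^ 2 ≠ 0 := by linarith
  rw [show (1 - y) / (1 + y) = (1 - y) ^ 2 / (1 - y ^ 2) by field_simp; ring,
    sqrt_div (sq_nonneg _), sqrt_sq h1.le]

theorem stmt_12 (α : ℝ) (hα : α ∈ Set.Ioo (0 : ℝ) 1) (y : ℝ)
    (hy : y ∈ Set.Icc (1 / 2 : ℝ) 1) (n : ℕ) (hn : 0 < n) :
    (∫ t in (0 : ℝ)..1,
        ((1 - t) / Real.sqrt (1 + t ^ 2 - 2 * t * y)) ^ (2 * n - 1) *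
          Real.sqrt (1 + t ^ 2 - 2 * t * y) ^ (α - 1)) ≤
      Real.sqrt ((1 - y) / (1 + y)) *
          (Real.arctan (Real.sqrt ((1 - y) / (1 + y))) +
            Real.arctan (y / Real.sqrt (1 - y ^ 2))) -
        (2 - 2 * y) ^ (α / 2) / α + 1 / α := by
  obtain ⟨hα0, -⟩ := hα
  rcases hy.2.eq_or_lt with rfl | hy1
  · rw [integral_at_one hα0 n]
    norm_num [zero_rpow (by positivity : α / 2 ≠ 0)]
  have hy2 : y ^ 2 < 1 := by nlinarith [hy.1]
  calc _ ≤ ∫ t in (0 : ℝ)..1, majorant α y t :=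
        intervalIntegral.integral_mono_on zero_le_one
          ((continuous_integrand hy2 α (2 * n - 1)).intervalIntegrable 0 1)
          ((continuous_majorant hy2 α).intervalIntegrable 0 1)
          fun t ht =>
            integrand_le_majorant hα0.le hy ht (one_add_sq_sub_two_mul_pos hy2 t) hn.ne'
    _ = _ := by
      rw [integral_majorant hy2 hα0.ne', ← div_sqrt_one_sub_sq hy2]
      ring
end

section
/- For α ∈ (0,1) and y ∈ [1/2,1], ∫₀¹ (1-t)·(1+t²-2ty)^{α/2-1} dt ≤ √((1-y)/(1+y))·(arctan√((1-y)/(1+y)) + arctan(y/√(1-y²))) − (2-2y)^{α/2}/α + 1/α. -/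
open Real MeasureTheory

/-!
Write `Q t = 1 + t ^ 2 - 2 * t * y = (t - y) ^ 2 + (1 - y ^ 2)` and split
`1 - t = (y - t) + (1 - y)`. The first part integrates exactly, `(y - t) * Q ^ (α / 2 - 1)` being
the derivative of `-Q ^ (α / 2) / α`. For `y ≥ 1 / 2` we have `Q ≤ 1` on `[0, 1]`, so there
`Q ^ (α / 2 - 1) ≤ Q⁻¹`, whose integral is a difference of arctangents. At `y = 1` the
integrand is `(1 - t) ^ (α - 1)` and the integral equals `1 / α`.
-/

section Quadratic

variable {y : ℝ}

lemma quadratic_pos (hy : |y| < 1) (t : ℝ) : 0 < 1 + t ^ 2 - 2 * t * y := by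
  nlinarith [abs_lt.1 hy, sq_nonneg (t - y)]

lemma continuous_quadratic_rpow (hy : |y| < 1) (s : ℝ) :
    Continuous fun t : ℝ => (1 + t ^ 2 - 2 * t * y) ^ s :=
  (by fun_prop : Continuous fun t : ℝ => 1 + t ^ 2 - 2 * t * y).rpow_const
    fun t => Or.inl (quadratic_pos hy t).ne'

lemma continuous_quadratic_inv (hy : |y| < 1) :
    Continuous fun t : ℝ => (1 + t ^ 2 - 2 * t * y)⁻¹ :=
  (by fun_prop : Continuous fun t : ℝ => 1 + t ^ 2 - 2 * t * y).inv₀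
    fun t => (quadratic_pos hy t).ne'

lemma hasDerivAt_quadratic (t : ℝ) :
    HasDerivAt (fun t : ℝ => 1 + t ^ 2 - 2 * t * y) (2 * t - 2 * y) t :=
  (((hasDerivAt_pow 2 t).const_add 1).sub
    ((hasDerivAt_id t).const_mul 2 |>.mul_const y)).congr_deriv (by simp)

lemma integral_sub_mul_quadratic_rpow (hy : |y| < 1) {s : ℝ} (hs : s ≠ 0) :
    ∫ t in (0 : ℝ)..1, (y - t) * (1 + t ^ 2 - 2 * t * y) ^ (s - 1) =
      (1 - (2 - 2 * y) ^ s) / (2 * s) := by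
  have hderiv (t : ℝ) : HasDerivAt (fun t : ℝ => -(1 + t ^ 2 - 2 * t * y) ^ s / (2 * s))
      ((y - t) * (1 + t ^ 2 - 2 * t * y) ^ (s - 1)) t :=
    ((hasDerivAt_quadratic t).rpow_const (p := s)
      (Or.inl (quadratic_pos hy t).ne')).neg.div_const (2 * s) |>.congr_deriv (by field_simp; ring)
  have hcont : Continuous fun t : ℝ => (y - t) * (1 + t ^ 2 - 2 * t * y) ^ (s - 1) :=
    (continuous_const.sub continuous_id).mul (continuous_quadratic_rpow hy _)
  rw [intervalIntegral.integral_eq_sub_of_hasDerivAt (fun t _ => hderiv t)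
    (hcont.intervalIntegrable 0 1)]
  norm_num
  ring

lemma integral_quadratic_inv (hy : |y| < 1) :
    ∫ t in (0 : ℝ)..1, (1 + t ^ 2 - 2 * t * y)⁻¹ =
      (arctan ((1 - y) / √(1 - y ^ 2)) + arctan (y / √(1 - y ^ 2))) / √(1 - y ^ 2) := by
  have hc : √(1 - y ^ 2) ^ 2 = 1 - y ^ 2 := sq_sqrt (by nlinarith [abs_lt.1 hy])
  have hc0 : 0 < √(1 - y ^ 2) := sqrt_pos.2 (by nlinarith [abs_lt.1 hy])
  set c := √(1 - y ^ 2)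
  have hderiv (t : ℝ) : HasDerivAt (fun t : ℝ => arctan ((t - y) / c) / c)
      (1 + t ^ 2 - 2 * t * y)⁻¹ t := by
    refine (((hasDerivAt_id t).sub_const y).div_const c).arctan.div_const c |>.congr_deriv ?_
    have hQ := (quadratic_pos hy t).ne'
    have h : 1 + ((t - y) / c) ^ 2 = (1 + t ^ 2 - 2 * t * y) / c ^ 2 := by
      field_simp; rw [hc]; ring
    simp only [id, h]
    field_simp
  rw [intervalIntegral.integral_eq_sub_of_hasDerivAt (fun t _ => hderiv t)
    ((continuous_quadratic_inv hy).intervalIntegrable 0 1), zero_sub, neg_div, arctan_neg]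
  ring

lemma integral_quadratic_rpow_le_integral_inv (hy : y ∈ Set.Ico (1 / 2 : ℝ) 1) {s : ℝ}
    (hs : -1 ≤ s) :
    ∫ t in (0 : ℝ)..1, (1 + t ^ 2 - 2 * t * y) ^ s ≤
      ∫ t in (0 : ℝ)..1, (1 + t ^ 2 - 2 * t * y)⁻¹ := by
  have hy' : |y| < 1 := abs_lt.2 ⟨by linarith [hy.1], hy.2⟩
  refine intervalIntegral.integral_mono_on zero_le_one
    ((continuous_quadratic_rpow hy' s).intervalIntegrable 0 1)
    ((continuous_quadratic_inv hy').intervalIntegrable 0 1) fun t ht => ?_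
  rw [← rpow_neg_one]
  exact rpow_le_rpow_of_exponent_ge (quadratic_pos hy' t) (by nlinarith [ht.1, ht.2, hy.1]) hs

lemma sqrt_div_one_add_eq (hy : |y| < 1) :
    √((1 - y) / (1 + y)) = (1 - y) / √(1 - y ^ 2) := by
  obtain ⟨hy0, hy1⟩ := abs_lt.1 hy
  have h1 : 0 < √(1 - y) := sqrt_pos.2 (by linarith)
  have h2 : 0 < √(1 + y) := sqrt_pos.2 (by linarith)
  rw [show 1 - y ^ 2 = (1 - y) * (1 + y) by ring, sqrt_mul (by linarith), sqrt_div (by linarith)]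
  field_simp
  rw [sq_sqrt (by linarith)]

end Quadratic

lemma integral_one_sub_mul_sq_rpow {α : ℝ} (hα : 0 < α) :
    ∫ t in (0 : ℝ)..1, (1 - t) * (1 + t ^ 2 - 2 * t * 1) ^ (α / 2 - 1) = 1 / α := by
  calc _ = ∫ t in (0 : ℝ)..1, (1 - t) ^ (α - 1) := by
        refine intervalIntegral.integral_congr_ae ?_
        filter_upwards [(Set.countable_singleton (1 : ℝ)).ae_notMem volume] with t ht1 ht
        rw [Set.uIoc_of_le zero_le_one] at ht
        have ht : 0 < 1 - t := sub_pos.2 (lt_of_le_of_ne ht.2 ht1)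
        rw [show 1 + t ^ 2 - 2 * t * 1 = (1 - t) ^ 2 by ring, ← rpow_natCast_mul ht.le,
          show α - 1 = (2 : ℕ) * (α / 2 - 1) + 1 by push_cast; ring, rpow_add_one ht.ne',
          mul_comm]
    _ = ∫ t in (0 : ℝ)..1, t ^ (α - 1) := by
        simpa using
          intervalIntegral.integral_comp_sub_left (a := 0) (b := 1) (fun t : ℝ => t ^ (α - 1)) 1
    _ = 1 / α := by
        rw [integral_rpow (Or.inl (by linarith)), sub_add_cancel, zero_rpow hα.ne', one_rpow]
        ring

theorem stmt_14 (α : ℝ) (hα : α ∈ Set.Ioo (0 : ℝ) 1) (y : ℝ)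
    (hy : y ∈ Set.Icc (1 / 2 : ℝ) 1) :
    (∫ t in (0 : ℝ)..1, (1 - t) * (1 + t ^ 2 - 2 * t * y) ^ (α / 2 - 1)) ≤
      Real.sqrt ((1 - y) / (1 + y)) *
          (Real.arctan (Real.sqrt ((1 - y) / (1 + y))) +
            Real.arctan (y / Real.sqrt (1 - y ^ 2))) -
        (2 - 2 * y) ^ (α / 2) / α + 1 / α := by
  obtain ⟨hα0, -⟩ := hα
  rcases hy.2.eq_or_lt with rfl | hy1
  · rw [integral_one_sub_mul_sq_rpow hα0]
    norm_num [zero_rpow (half_pos hα0).ne']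
  have hy' : |y| < 1 := abs_lt.2 ⟨by linarith [hy.1], hy1⟩
  have hint (f : ℝ → ℝ) (hf : Continuous f) :
      IntervalIntegrable (fun t => f t * (1 + t ^ 2 - 2 * t * y) ^ (α / 2 - 1)) volume 0 1 :=
    (hf.mul (continuous_quadratic_rpow hy' _)).intervalIntegrable 0 1
  calc _ = (∫ t in (0 : ℝ)..1, (y - t) * (1 + t ^ 2 - 2 * t * y) ^ (α / 2 - 1)) +
        (1 - y) * ∫ t in (0 : ℝ)..1, (1 + t ^ 2 - 2 * t * y) ^ (α / 2 - 1) := by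
        rw [← intervalIntegral.integral_const_mul, ← intervalIntegral.integral_add
          (hint _ (by fun_prop)) (hint _ continuous_const)]
        congr 1 with t
        ring
    _ ≤ (1 - (2 - 2 * y) ^ (α / 2)) / (2 * (α / 2)) +
        (1 - y) * ∫ t in (0 : ℝ)..1, (1 + t ^ 2 - 2 * t * y)⁻¹ := by
        rw [integral_sub_mul_quadratic_rpow hy' (half_pos hα0).ne']
        gcongr
        exact integral_quadratic_rpow_le_integral_inv ⟨hy.1, hy1⟩ (by linarith)
    _ = _ := by
        rw [integral_quadratic_inv hy', sqrt_div_one_add_eq hy']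
        field_simp
        ring
end

section
/- For α ∈ (0,1), y ∈ [1/2,1] and every positive integer n, I_n(y) = ∫₀¹ ((1-t)/√(1+t²-2ty))^{2n-1} (√(1+t²-2ty))^{α-1} dt ≤ π/(3√3) − (2-2y)^{α/2}/α + 1/α. -/
/-!
On `[0, 1]` we have `1 + t² - 2ty = (1 - t)² + 2t(1 - y) ≥ (1 - t)²`, so the base
`(1 - t) / √(1 + t² - 2ty)` lies in `[0, 1]` and the integrand is at most
`(1 - t) (1 + t² - 2ty)^(α/2 - 1)`. Splitting `1 - t = (y - t) + (1 - y)`, the first part has the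
primitive `-(1 + t² - 2ty)^(α/2) / α` and contributes `(1 - (2 - 2y)^(α/2)) / α`. For `y ≥ 1/2`
the quadratic is at most `1` on `[0, 1]`, so the second part is at most
`(1 - y) ∫₀¹ (1 + t² - 2ty)⁻¹ dt = u (π/2 - arctan u)` with `u = √((1 - y)/(1 + y)) ≤ 1/√3`;
this increases in `u` and equals `π / (3√3)` at `u = 1/√3`.
At `y = 1` the integrand is `(1 - t)^(α - 1)`, whose integral is `1 / α`.
-/

open Real

lemma monotoneOn_mul_pi_div_two_sub_arctan :
    MonotoneOn (fun u : ℝ => u * (π / 2 - arctan u)) (Set.Icc 0 1) := by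
  refine monotoneOn_of_hasDerivWithinAt_nonneg (convex_Icc 0 1) (by fun_prop)
    (fun u _ => (((hasDerivAt_id u).mul
      ((hasDerivAt_const u (π / 2)).sub (hasDerivAt_arctan u)))).hasDerivWithinAt) ?_
  intro u hu
  rw [interior_Icc] at hu
  have harctan : arctan u ≤ π / 4 := arctan_one ▸ arctan_le_arctan_iff.2 hu.2.le
  have hfrac : u / (1 + u ^ 2) ≤ 1 / 2 := by
    rw [div_le_iff₀ (by positivity)]; nlinarith [sq_nonneg (u - 1)]
  simp only [id, Pi.sub_apply, one_mul, zero_sub, mul_neg, mul_one_div]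
  linarith [pi_gt_three]

lemma mul_pi_div_two_sub_arctan_le_s16 {u : ℝ} (h0 : 0 ≤ u) (h1 : u ≤ (√3)⁻¹) :
    u * (π / 2 - arctan u) ≤ π / (3 * √3) := by
  have hinv : (√3)⁻¹ ≤ 1 := inv_le_one_of_one_le₀ (by simp [Real.one_le_sqrt])
  refine (monotoneOn_mul_pi_div_two_sub_arctan ⟨h0, h1.trans hinv⟩ ⟨by positivity, hinv⟩
    h1).trans_eq ?_
  simp only [arctan_inv_sqrt_three]
  field_simp
  ring

lemma arctan_div_sqrt_one_sub_sq {y : ℝ} (hy0 : 0 < y) (hy1 : y < 1) :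
    arctan (y / √(1 - y ^ 2)) = π / 2 - 2 * arctan ((1 - y) / √(1 - y ^ 2)) := by
  have hc : 0 < √(1 - y ^ 2) := sqrt_pos.2 (by nlinarith)
  have hc2 : √(1 - y ^ 2) ^ 2 = 1 - y ^ 2 := sq_sqrt (by nlinarith)
  set u := (1 - y) / √(1 - y ^ 2) with hu
  have hu0 : 0 < u := div_pos (by linarith) hc
  have hu1 : u < 1 := by rw [hu, div_lt_one hc]; nlinarith
  rw [two_mul_arctan (by linarith) hu1,
    ← arctan_inv_of_pos (div_pos (by positivity) (by nlinarith))]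
  congr 1
  have : 1 - y ≠ 0 := by linarith
  rw [hu]
  field_simp
  nlinarith

lemma one_sub_div_sqrt_mul_arctan_add_arctan_le {y : ℝ} (hy0 : 1 / 2 ≤ y) (hy1 : y < 1) :
    (1 - y) / √(1 - y ^ 2) * (arctan ((1 - y) / √(1 - y ^ 2)) + arctan (y / √(1 - y ^ 2))) ≤
      π / (3 * √3) := by
  have hc : 0 < √(1 - y ^ 2) := sqrt_pos.2 (by nlinarith)
  have hc2 : √(1 - y ^ 2) ^ 2 = 1 - y ^ 2 := sq_sqrt (by nlinarith)
  have hu0 : 0 ≤ (1 - y) / √(1 - y ^ 2) := div_nonneg (by linarith) hc.le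
  have hu1 : (1 - y) / √(1 - y ^ 2) ≤ (√3)⁻¹ := by
    refine (pow_le_pow_iff_left₀ hu0 (by positivity) two_ne_zero).1 ?_
    rw [inv_pow, sq_sqrt (by norm_num), div_pow, hc2, div_le_iff₀ (by nlinarith)]
    nlinarith
  rw [arctan_div_sqrt_one_sub_sq (by linarith) hy1]
  convert mul_pi_div_two_sub_arctan_le_s16 hu0 hu1 using 2
  ring

/-- `|t - e^{iθ}|²` for `y = cos θ`. -/
def chordSq (y t : ℝ) : ℝ := 1 + t ^ 2 - 2 * t * y

section
variable {y t : ℝ}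

lemma chordSq_eq_sq_add : chordSq y t = (1 - t) ^ 2 + 2 * t * (1 - y) := by
  unfold chordSq; ring

lemma chordSq_pos (ht : 0 ≤ t) (hy : y < 1) : 0 < chordSq y t := by
  rw [chordSq_eq_sq_add]
  rcases ht.eq_or_lt with rfl | ht
  · norm_num
  · nlinarith [sq_nonneg (1 - t)]

lemma sq_one_sub_le_chordSq (ht : 0 ≤ t) (hy : y ≤ 1) : (1 - t) ^ 2 ≤ chordSq y t := by
  rw [chordSq_eq_sq_add]; nlinarith

lemma chordSq_le_one (ht : 0 ≤ t) (hty : t ≤ 2 * y) : chordSq y t ≤ 1 := by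
  unfold chordSq; nlinarith

lemma hasDerivAt_chordSq (y t : ℝ) : HasDerivAt (chordSq y) (2 * t - 2 * y) t := by
  have h : chordSq y = fun s => 1 + s ^ 2 - 2 * y * s := by
    funext s; unfold chordSq; ring
  rw [h]
  simpa using ((hasDerivAt_pow 2 t).const_add 1).fun_sub ((hasDerivAt_id t).const_mul (2 * y))

lemma div_sqrt_chordSq_pow_mul_sqrt_rpow_le {α : ℝ} {n : ℕ} (ht0 : 0 ≤ t) (ht1 : t ≤ 1) (hy : y < 1)
    (hn : 0 < n) :
    ((1 - t) / √(chordSq y t)) ^ (2 * n - 1) * √(chordSq y t) ^ (α - 1) ≤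
      (1 - t) * chordSq y t ^ (α / 2 - 1) := by
  have hQ := chordSq_pos ht0 hy
  have hratio0 : 0 ≤ (1 - t) / √(chordSq y t) := div_nonneg (by linarith) (sqrt_nonneg _)
  have hratio1 : (1 - t) / √(chordSq y t) ≤ 1 := by
    rw [div_le_one (sqrt_pos.2 hQ)]
    exact le_sqrt_of_sq_le (sq_one_sub_le_chordSq ht0 hy.le)
  calc ((1 - t) / √(chordSq y t)) ^ (2 * n - 1) * √(chordSq y t) ^ (α - 1)
      ≤ (1 - t) / √(chordSq y t) * √(chordSq y t) ^ (α - 1) := by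
        gcongr
        exact pow_le_of_le_one hratio0 hratio1 (by omega)
    _ = (1 - t) * chordSq y t ^ (α / 2 - 1) := by
        rw [sqrt_eq_rpow, ← rpow_mul hQ.le, div_mul_eq_mul_div, mul_div_assoc,
          ← rpow_sub hQ]
        ring_nf

lemma continuous_chordSq (y : ℝ) : Continuous (chordSq y) := by
  unfold chordSq; fun_prop

lemma continuousOn_chordSq_rpow (hy : y < 1) (p : ℝ) :
    ContinuousOn (fun t => chordSq y t ^ p) (Set.uIcc 0 1) := by
  refine (continuous_chordSq y).continuousOn.rpow_const fun t ht => Or.inl ?_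
  rw [Set.uIcc_of_le zero_le_one] at ht
  exact (chordSq_pos ht.1 hy).ne'

lemma integral_sub_mul_chordSq_rpow {α : ℝ} (hα : α ≠ 0) (hy : y < 1) :
    ∫ t in (0 : ℝ)..1, (y - t) * chordSq y t ^ (α / 2 - 1) = (1 - (2 - 2 * y) ^ (α / 2)) / α := by
  have hF : ∀ t ∈ Set.uIcc (0 : ℝ) 1, HasDerivAt (fun s => -chordSq y s ^ (α / 2) / α)
      ((y - t) * chordSq y t ^ (α / 2 - 1)) t := by
    intro t ht
    rw [Set.uIcc_of_le zero_le_one] at ht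
    refine (((hasDerivAt_chordSq y t).rpow_const (p := α / 2)
      (Or.inl (chordSq_pos ht.1 hy).ne')).fun_neg.div_const α).congr_deriv ?_
    field_simp
    ring
  rw [intervalIntegral.integral_eq_sub_of_hasDerivAt hF
    (((continuous_const.sub continuous_id).continuousOn.mul
      (continuousOn_chordSq_rpow hy _)).intervalIntegrable)]
  have h1 : chordSq y 1 = 2 - 2 * y := by unfold chordSq; ring
  have h0 : chordSq y 0 = 1 := by unfold chordSq; ring
  rw [h1, h0, one_rpow]
  ring

lemma integral_inv_chordSq (hy0 : -1 < y) (hy1 : y < 1) :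
    ∫ t in (0 : ℝ)..1, (chordSq y t)⁻¹ =
      (arctan ((1 - y) / √(1 - y ^ 2)) + arctan (y / √(1 - y ^ 2))) / √(1 - y ^ 2) := by
  set c := √(1 - y ^ 2)
  have hc : 0 < c := sqrt_pos.2 (by nlinarith)
  have hc2 : c ^ 2 = 1 - y ^ 2 := sq_sqrt (by nlinarith)
  have hF : ∀ t ∈ Set.uIcc (0 : ℝ) 1,
      HasDerivAt (fun s => arctan ((s - y) / c) / c) (chordSq y t)⁻¹ t := by
    intro t _
    refine ((((hasDerivAt_id t).sub_const y).div_const c).arctan.div_const c).congr_deriv ?_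
    have : chordSq y t = c ^ 2 + (t - y) ^ 2 := by rw [hc2]; unfold chordSq; ring
    rw [this, id]
    field_simp
  rw [intervalIntegral.integral_eq_sub_of_hasDerivAt hF
    (((continuousOn_chordSq_rpow hy1 (-1)).congr
      fun t _ => (rpow_neg_one _).symm).intervalIntegrable)]
  rw [zero_sub, neg_div, arctan_neg]
  ring

lemma integral_div_sqrt_chordSq_pow_mul_sqrt_rpow_le {α : ℝ} {n : ℕ} (hy : y < 1) (hn : 0 < n) :
    ∫ t in (0 : ℝ)..1, ((1 - t) / √(chordSq y t)) ^ (2 * n - 1) * √(chordSq y t) ^ (α - 1) ≤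
      ∫ t in (0 : ℝ)..1, (1 - t) * chordSq y t ^ (α / 2 - 1) := by
  have hsqrt : ContinuousOn (fun t => √(chordSq y t)) (Set.uIcc 0 1) := by
    simpa only [sqrt_eq_rpow] using continuousOn_chordSq_rpow hy (1 / 2)
  have hsqrt_ne : ∀ t ∈ Set.uIcc (0 : ℝ) 1, √(chordSq y t) ≠ 0 := by
    intro t ht
    rw [Set.uIcc_of_le zero_le_one] at ht
    exact (sqrt_pos.2 (chordSq_pos ht.1 hy)).ne'
  have hsub : ContinuousOn (fun t : ℝ => 1 - t) (Set.uIcc 0 1) := by fun_prop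
  refine intervalIntegral.integral_mono_on zero_le_one ?_ ?_
    fun t ht => div_sqrt_chordSq_pow_mul_sqrt_rpow_le ht.1 ht.2 hy hn
  · exact (((hsub.div hsqrt hsqrt_ne).pow _).mul
      (hsqrt.rpow_const fun t ht => Or.inl (hsqrt_ne t ht))).intervalIntegrable
  · exact (hsub.mul (continuousOn_chordSq_rpow hy _)).intervalIntegrable

end

lemma integral_one_sub_rpow {α : ℝ} (hα : 0 < α) :
    ∫ t in (0 : ℝ)..1, (1 - t) ^ (α - 1) = 1 / α := by
  rw [intervalIntegral.integral_comp_sub_left (fun u => u ^ (α - 1)), sub_self, sub_zero,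
    integral_rpow (Or.inl (by linarith)), sub_add_cancel, one_rpow, zero_rpow hα.ne', sub_zero]

lemma integral_div_sqrt_chordSq_one_pow_mul_sqrt_rpow {α : ℝ} (hα : 0 < α) (n : ℕ) :
    ∫ t in (0 : ℝ)..1, ((1 - t) / √(chordSq 1 t)) ^ n * √(chordSq 1 t) ^ (α - 1) = 1 / α := by
  rw [← integral_one_sub_rpow hα]
  refine intervalIntegral.integral_congr_ae ((MeasureTheory.Measure.ae_ne _ 1).mono
    fun t ht1 ht => ?_)
  rw [Set.uIoc_of_le zero_le_one] at ht
  have hpos : 0 < 1 - t := sub_pos.2 (lt_of_le_of_ne ht.2 ht1)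
  have : √(chordSq 1 t) = 1 - t := by
    rw [← sqrt_sq hpos.le]; congr 1; unfold chordSq; ring
  rw [this, div_self hpos.ne', one_pow, one_mul]

lemma integral_one_sub_mul_chordSq_rpow_le {α y : ℝ} (hα : 0 < α) (hy0 : 1 / 2 ≤ y) (hy1 : y < 1) :
    ∫ t in (0 : ℝ)..1, (1 - t) * chordSq y t ^ (α / 2 - 1) ≤
      (1 - (2 - 2 * y) ^ (α / 2)) / α + π / (3 * √3) := by
  have hint : ∀ p : ℝ, IntervalIntegrable (fun t => chordSq y t ^ p) MeasureTheory.volume 0 1 :=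
    fun p => (continuousOn_chordSq_rpow hy1 p).intervalIntegrable
  calc ∫ t in (0 : ℝ)..1, (1 - t) * chordSq y t ^ (α / 2 - 1)
      = (∫ t in (0 : ℝ)..1, (y - t) * chordSq y t ^ (α / 2 - 1)) +
          (1 - y) * ∫ t in (0 : ℝ)..1, chordSq y t ^ (α / 2 - 1) := by
        have hint' : IntervalIntegrable (fun t => (y - t) * chordSq y t ^ (α / 2 - 1))
            MeasureTheory.volume 0 1 :=
          ((continuous_const.sub continuous_id).continuousOn.mul
            (continuousOn_chordSq_rpow hy1 _)).intervalIntegrable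
        rw [← intervalIntegral.integral_const_mul,
          ← intervalIntegral.integral_add hint' ((hint _).const_mul _)]
        congr 1; ext t; ring
    _ ≤ (1 - (2 - 2 * y) ^ (α / 2)) / α + (1 - y) * ∫ t in (0 : ℝ)..1, chordSq y t ^ (-1 : ℝ) := by
        rw [integral_sub_mul_chordSq_rpow hα.ne' hy1]
        gcongr _ + _ * ?_
        refine intervalIntegral.integral_mono_on zero_le_one (hint _) (hint _) fun t ht => ?_
        exact rpow_le_rpow_of_exponent_ge (chordSq_pos ht.1 hy1)
          (chordSq_le_one ht.1 (by linarith [ht.2])) (by linarith)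
    _ ≤ (1 - (2 - 2 * y) ^ (α / 2)) / α + π / (3 * √3) := by
        simp only [rpow_neg_one]
        rw [integral_inv_chordSq (by linarith) hy1]
        gcongr _ + ?_
        exact (le_of_eq (by ring)).trans (one_sub_div_sqrt_mul_arctan_add_arctan_le hy0 hy1)

theorem stmt_16 (α : ℝ) (hα : α ∈ Set.Ioo (0 : ℝ) 1) (y : ℝ)
    (hy : y ∈ Set.Icc (1 / 2 : ℝ) 1) (n : ℕ) (hn : 0 < n) :
    (∫ t in (0 : ℝ)..1,
        ((1 - t) / Real.sqrt (1 + t ^ 2 - 2 * t * y)) ^ (2 * n - 1) *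
          Real.sqrt (1 + t ^ 2 - 2 * t * y) ^ (α - 1)) ≤
      π / (3 * Real.sqrt 3) - (2 - 2 * y) ^ (α / 2) / α + 1 / α := by
  obtain ⟨hα0, -⟩ := hα
  obtain ⟨hy0, hy1⟩ := hy
  rcases hy1.eq_or_lt with rfl | hy1
  · refine (integral_div_sqrt_chordSq_one_pow_mul_sqrt_rpow hα0 _).trans_le ?_
    have : (0 : ℝ) < π / (3 * √3) := by positivity
    norm_num [zero_rpow (div_pos hα0 two_pos).ne']
    linarith
  · calc _ ≤ ∫ t in (0 : ℝ)..1, (1 - t) * chordSq y t ^ (α / 2 - 1) :=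
          integral_div_sqrt_chordSq_pow_mul_sqrt_rpow_le hy1 hn
      _ ≤ (1 - (2 - 2 * y) ^ (α / 2)) / α + π / (3 * √3) :=
          integral_one_sub_mul_chordSq_rpow_le hα0 hy0 hy1
      _ = _ := by ring
end

section
/- For α ∈ (0,1), every positive integer n and θ ∈ (−π, π), |∑_{k=0}^{2n-1} C(α,k) e^{ikθ}| ≤ |1+e^{iθ}|^α + α·β_n·∫₀¹ (1-t)^{2n-1} |1+t e^{iθ}|^{α-2n} dt, where C(α,k) = α(α-1)⋯(α-k+1)/k! and β_n = ∏_{k=1}^{2n-1}(1−α/k). -/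
/-!
On the segment from `1` to `1 + z` with `1 + z` in the slit plane, the `k`-th derivative of
`t ↦ (1 + t z) ^ a` is `a (a - 1) ⋯ (a - k + 1) z ^ k (1 + t z) ^ (a - k)`, so Taylor's formula with
integral remainder writes the partial binomial sum as `(1 + z) ^ a` minus an explicit integral,
and the triangle inequality bounds it. For `z = e^{iθ}` with `|θ| < π` the segment avoids the
slit, and for `0 ≤ a ≤ 1` the remainder coefficient `|a (a - 1) ⋯ (a - m)| / m!` equals
`a ∏_{k=1}^m (1 - a / k)`.
-/

open Real Complex

section

variable {𝕜 E : Type*} [NontriviallyNormedField 𝕜] [NormedAddCommGroup E] [NormedSpace 𝕜 E]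
  {F : ℕ → 𝕜 → E} {s : Set 𝕜}

theorem iteratedDerivWithin_eq_of_hasDerivWithinAt (hs : UniqueDiffOn 𝕜 s)
    (hF : ∀ k, ∀ x ∈ s, HasDerivWithinAt (F k) (F (k + 1) x) s x) (k : ℕ) :
    Set.EqOn (iteratedDerivWithin k (F 0) s) (F k) s := by
  induction k with
  | zero => intro x _; simp
  | succ k ih =>
    intro x hx
    rw [iteratedDerivWithin_succ, derivWithin_congr ih (ih hx)]
    exact (hF k x hx).derivWithin (hs x hx)

theorem contDiffOn_of_hasDerivWithinAt (hs : UniqueDiffOn 𝕜 s)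
    (hF : ∀ k, ∀ x ∈ s, HasDerivWithinAt (F k) (F (k + 1) x) s x) (n : ℕ) :
    ContDiffOn 𝕜 n (F 0) s := by
  induction n generalizing F with
  | zero => exact contDiffOn_zero.2 fun x hx => (hF 0 x hx).continuousWithinAt
  | succ n ih =>
    rw [Nat.cast_succ, contDiffOn_succ_iff_derivWithin hs]
    refine ⟨fun x hx => (hF 0 x hx).differentiableWithinAt, by simp, ?_⟩
    have hderiv : Set.EqOn (derivWithin (F 0) s) (F 1) s :=
      fun x hx => (hF 0 x hx).derivWithin (hs x hx)
    exact (ih (F := fun k => F (k + 1)) fun k => hF (k + 1)).congr hderiv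

end

open Nat in
theorem taylor_integral_remainder_of_hasDerivWithinAt {E : Type*} [NormedAddCommGroup E]
    [NormedSpace ℝ E] [CompleteSpace E] {F : ℕ → ℝ → E} {a b : ℝ} (hab : a < b)
    (hF : ∀ k, ∀ x ∈ Set.Icc a b, HasDerivWithinAt (F k) (F (k + 1) x) (Set.Icc a b) x)
    (n : ℕ) :
    F 0 b = ∑ k ∈ Finset.range (n + 1), ((k ! : ℝ)⁻¹ * (b - a) ^ k) • F k a +
      ∫ t in a..b, ((b - t) ^ n / n !) • F (n + 1) t := by
  have hs := uniqueDiffOn_Icc hab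
  have hderiv := iteratedDerivWithin_eq_of_hasDerivWithinAt hs hF
  have htaylor := taylor_integral_remainder (n := n)
    (by rw [Set.uIcc_of_le hab.le]; exact contDiffOn_of_hasDerivWithinAt hs hF (n + 1))
  rw [Set.uIcc_of_le hab.le, taylor_within_apply, sub_eq_iff_eq_add'] at htaylor
  rw [htaylor]
  congr 1
  · refine Finset.sum_congr rfl fun k _ => ?_
    rw [hderiv k (Set.left_mem_Icc.2 hab.le)]
  · refine intervalIntegral.integral_congr fun t ht => ?_
    rw [Set.uIcc_of_le hab.le] at ht
    simp only [hderiv (n + 1) ht]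

open Nat Polynomial in
theorem abs_descPochhammer_eval_succ {a : ℝ} (ha₀ : 0 ≤ a) (ha₁ : a ≤ 1) (n : ℕ) :
    |(descPochhammer ℝ (n + 1)).eval a| = a * n ! * ∏ k ∈ Finset.Icc 1 n, (1 - a / k) := by
  induction n with
  | zero => simp [abs_of_nonneg ha₀]
  | succ n ih =>
    have hn : (0 : ℝ) < n + 1 := by positivity
    rw [descPochhammer_succ_eval, abs_mul, ih, Finset.prod_Icc_succ_top (by omega),
      abs_of_nonpos (by push_cast; linarith), factorial_succ]
    push_cast
    field_simp
    ring

namespace Complex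

open Nat Polynomial

theorem hasDerivAt_descPochhammer_mul_cpow_one_add_mul {a z : ℂ} {t : ℝ}
    (ht : 1 + t * z ∈ slitPlane) (k : ℕ) :
    HasDerivAt (fun s : ℝ => (descPochhammer ℂ k).eval a * z ^ k * (1 + s * z) ^ (a - k))
      ((descPochhammer ℂ (k + 1)).eval a * z ^ (k + 1) * (1 + t * z) ^ (a - (k + 1 : ℕ))) t := by
  have hpow := (((hasDerivAt_id (t : ℂ)).mul_const z).const_add 1).cpow_const (c := a - k) ht
  refine (hpow.comp_ofReal.const_mul ((descPochhammer ℂ k).eval a * z ^ k)).congr_deriv ?_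
  rw [descPochhammer_succ_eval, id, Nat.cast_succ, sub_add_eq_sub_sub]
  ring

theorem cpow_one_add_eq_sum_add_integral {a z : ℂ} (hz : 1 + z ∈ slitPlane) (n : ℕ) :
    (1 + z) ^ a = ∑ k ∈ Finset.range (n + 1), (descPochhammer ℂ k).eval a / k ! * z ^ k +
      ∫ t in (0 : ℝ)..1, ((1 - t) ^ n / n !) •
        ((descPochhammer ℂ (n + 1)).eval a * z ^ (n + 1) * (1 + t * z) ^ (a - (n + 1 : ℕ))) := by
  have hmem : ∀ t ∈ Set.Icc (0 : ℝ) 1, 1 + t * z ∈ slitPlane := fun t ht => by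
    simpa [real_smul] using
      starConvex_one_slitPlane.add_smul_mem hz ht.1 ht.2
  have := taylor_integral_remainder_of_hasDerivWithinAt zero_lt_one
    (F := fun k s => (descPochhammer ℂ k).eval a * z ^ k * (1 + s * z) ^ (a - k))
    (fun k t ht => (hasDerivAt_descPochhammer_mul_cpow_one_add_mul (hmem t ht) k).hasDerivWithinAt)
    n
  simp only [descPochhammer_zero, eval_one, pow_zero, one_mul, ofReal_one, CharP.cast_eq_zero,
    sub_zero, ofReal_zero, zero_mul, add_zero, one_cpow, mul_one, one_pow] at this
  rw [this]
  congr 1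
  refine Finset.sum_congr rfl fun k _ => ?_
  rw [real_smul]
  push_cast
  ring

theorem norm_sum_descPochhammer_mul_pow_le {z : ℂ} (hz : 1 + z ∈ slitPlane) (a : ℝ) (n : ℕ) :
    ‖∑ k ∈ Finset.range (n + 1), (((descPochhammer ℝ k).eval a / k ! : ℝ) : ℂ) * z ^ k‖ ≤
      ‖1 + z‖ ^ a + |(descPochhammer ℝ (n + 1)).eval a| / n ! * ‖z‖ ^ (n + 1) *
        ∫ t in (0 : ℝ)..1, (1 - t) ^ n * ‖1 + t * z‖ ^ (a - (n + 1 : ℕ)) := by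
  have hcast : ∀ k, (((descPochhammer ℝ k).eval a : ℝ) : ℂ) = (descPochhammer ℂ k).eval (a : ℂ) :=
    fun k => by simp [descPochhammer_eval_eq_prod_range]
  have htaylor := cpow_one_add_eq_sum_add_integral (a := a) hz n
  simp only [ofReal_div, hcast, ofReal_natCast]
  rw [eq_sub_of_add_eq htaylor.symm, ← norm_cpow_real]
  refine (norm_sub_le _ _).trans (add_le_add_right ?_ _)
  refine (intervalIntegral.norm_integral_le_integral_norm zero_le_one).trans_eq ?_
  rw [← intervalIntegral.integral_const_mul]
  refine intervalIntegral.integral_congr fun t ht => ?_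
  rw [Set.uIcc_of_le zero_le_one] at ht
  have h1t : 0 ≤ 1 - t := sub_nonneg.2 ht.2
  simp only [norm_smul, norm_mul, norm_pow, ← hcast, norm_real, norm_div, Real.norm_eq_abs,
    abs_of_nonneg h1t, Nat.abs_cast]
  rw [← ofReal_natCast, ← ofReal_sub, norm_cpow_real]
  ring

theorem one_add_exp_mul_I_mem_slitPlane {θ : ℝ} (hθ : θ ∈ Set.Ioo (-π) π) :
    1 + exp (θ * I) ∈ slitPlane := by
  have hcos : 0 < Real.cos (θ / 2) :=
    Real.cos_pos_of_mem_Ioo ⟨by linarith [hθ.1], by linarith [hθ.2]⟩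
  refine mem_slitPlane_iff.2 (Or.inl ?_)
  rw [add_re, one_re, exp_ofReal_mul_I_re]
  have hsq := Real.cos_sq (θ / 2)
  rw [mul_div_cancel₀ θ two_ne_zero] at hsq
  nlinarith

end Complex

theorem stmt_19 (α : ℝ) (hα : α ∈ Set.Ioo (0 : ℝ) 1) (n : ℕ) (hn : 0 < n)
    (θ : ℝ) (hθ : θ ∈ Set.Ioo (-π) π) :
    ‖(∑ k ∈ Finset.range (2 * n),
          (((∏ j ∈ Finset.range k, (α - j)) / k.factorial : ℝ) : ℂ) *
            Complex.exp (k * θ * Complex.I))‖ ≤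
      ‖(1 + Complex.exp (θ * Complex.I))‖ ^ α +
        α * (∏ k ∈ Finset.Icc 1 (2 * n - 1), (1 - α / k)) *
          ∫ t in (0 : ℝ)..1,
            (1 - t) ^ (2 * n - 1) *
              ‖(1 + t * Complex.exp (θ * Complex.I))‖ ^ (α - 2 * n) := by
  obtain ⟨m, hm⟩ : ∃ m, 2 * n = m + 1 := ⟨2 * n - 1, by omega⟩
  have hm' : (2 * n : ℝ) = (m + 1 : ℕ) := by exact_mod_cast hm
  have hsum : ∀ k : ℕ, (((∏ j ∈ Finset.range k, (α - j)) / k.factorial : ℝ) : ℂ) *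
      exp (k * θ * I) = (((descPochhammer ℝ k).eval α / k.factorial : ℝ) : ℂ) *
        exp (θ * I) ^ k := fun k => by
    rw [descPochhammer_eval_eq_prod_range, mul_assoc, Complex.exp_nat_mul]
  have hcoef : α * ∏ k ∈ Finset.Icc 1 m, (1 - α / k) =
      |(descPochhammer ℝ (m + 1)).eval α| / m.factorial := by
    rw [abs_descPochhammer_eval_succ hα.1.le hα.2.le]
    field_simp
  simp only [hsum, hm, Nat.add_sub_cancel, hcoef, hm']
  simpa [norm_exp_ofReal_mul_I] using
    norm_sum_descPochhammer_mul_pow_le (one_add_exp_mul_I_mem_slitPlane hθ) α m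
end
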